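/- Second Strang Lemma: Let V be a normed space with norm \|·\|_h, V_h ⊂ V a finite dimensional subspace, a_h a bilinear form on V that is coercive on V_h with constant α and bounded on V with constant M, and let u ∈ V, with u_h ∈ V_h satisfying a_h(u_h, v_h) = F(v_h) for all v_h ∈ V_h for a bounded linear functional F. Then \|u - u_h\|_h ≤ (1 + M/α) inf_{v_h ∈ V_h} \|u - v_h\|_h + (1/α) sup_{0 ≠ v_h ∈ V_h} |a_h(u, v_h) - F(v_h)| / \|v_h\|_h. -/

import Mathlib

/-!
Write `w = u_h - v_h ∈ V_h` for an arbitrary `v_h ∈ V_h`. The discrete equation turns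
`a_h(w, w)` into `(F(w) - a_h(u, w)) + a_h(u - v_h, w)`, so coercivity bounds `α ‖w‖` by the
consistency error plus `M ‖u - v_h‖`. The triangle inequality through `v_h` then gives the
estimate for each `v_h`, and taking the infimum over `v_h` finishes the proof.
-/

noncomputable def consistencyError {V : Type*} [NormedAddCommGroup V] [NormedSpace ℝ V]
    (Vh : Subspace ℝ V) (ah : V →ₗ[ℝ] V →ₗ[ℝ] ℝ) (F : V →L[ℝ] ℝ) (u : V) : ℝ :=
  sSup {r : ℝ | ∃ vh ∈ Vh, vh ≠ 0 ∧ r = |ah u vh - F vh| / ‖vh‖}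

theorem Real.le_mul_csInf_add {s : Set ℝ} (hs : s.Nonempty) {a b c : ℝ} (hc : 0 < c)
    (h : ∀ x ∈ s, a ≤ c * x + b) : a ≤ c * sInf s + b := by
  have : (a - b) / c ≤ sInf s :=
    le_csInf hs fun x hx => (div_le_iff₀' hc).mpr (by linarith [h x hx])
  linarith [(div_le_iff₀' hc).mp this]

namespace consistencyError

variable {V : Type*} [NormedAddCommGroup V] [NormedSpace ℝ V]
  {Vh : Subspace ℝ V} {ah : V →ₗ[ℝ] V →ₗ[ℝ] ℝ} {F : V →L[ℝ] ℝ} {u : V}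

theorem nonneg : 0 ≤ consistencyError Vh ah F u :=
  Real.sSup_nonneg (by rintro r ⟨vh, -, -, rfl⟩; positivity)

theorem abs_sub_le {M : ℝ} (hbdd : ∀ u v : V, |ah u v| ≤ M * ‖u‖ * ‖v‖)
    {w : V} (hw : w ∈ Vh) : |ah u w - F w| ≤ consistencyError Vh ah F u * ‖w‖ := by
  rcases eq_or_ne w 0 with rfl | hw0
  · simp
  -- Without the bound on `a_h` the `sSup` could be the junk value `0` of an unbounded set.
  have hbddAbove : BddAbove {r : ℝ | ∃ vh ∈ Vh, vh ≠ 0 ∧ r = |ah u vh - F vh| / ‖vh‖} := by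
    refine ⟨M * ‖u‖ + ‖F‖, ?_⟩
    rintro r ⟨vh, -, hvh0, rfl⟩
    rw [div_le_iff₀ (norm_pos_iff.mpr hvh0)]
    calc |ah u vh - F vh| ≤ |ah u vh| + |F vh| := abs_sub _ _
      _ ≤ M * ‖u‖ * ‖vh‖ + ‖F‖ * ‖vh‖ := add_le_add (hbdd u vh) (F.le_opNorm vh)
      _ = (M * ‖u‖ + ‖F‖) * ‖vh‖ := by ring
  exact (div_le_iff₀ (norm_pos_iff.mpr hw0)).mp (le_csSup hbddAbove ⟨w, hw, hw0, rfl⟩)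

end consistencyError

section Strang

variable {V : Type*} [NormedAddCommGroup V] [NormedSpace ℝ V]
  {Vh : Subspace ℝ V} {ah : V →ₗ[ℝ] V →ₗ[ℝ] ℝ} {F : V →L[ℝ] ℝ} {u uh : V}
  {α M : ℝ}

theorem mul_norm_discrete_error_le (hcoer : ∀ v ∈ Vh, ah v v ≥ α * ‖v‖ ^ 2) (hM : 0 ≤ M)
    (hbdd : ∀ u v : V, |ah u v| ≤ M * ‖u‖ * ‖v‖) (huh : uh ∈ Vh)
    (hdisc : ∀ vh ∈ Vh, ah uh vh = F vh) {vh : V} (hvh : vh ∈ Vh) :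
    α * ‖uh - vh‖ ≤ consistencyError Vh ah F u + M * ‖u - vh‖ := by
  set w := uh - vh
  set S := consistencyError Vh ah F u
  have hw : w ∈ Vh := Vh.sub_mem huh hvh
  rcases eq_or_ne w 0 with hw0 | hw0
  · rw [hw0, norm_zero, mul_zero]
    exact add_nonneg consistencyError.nonneg (by positivity)
  have hsplit : ah w w = (F w - ah u w) + ah (u - vh) w := by
    have := hdisc w hw
    simp only [w, map_sub, LinearMap.sub_apply] at this ⊢
    linarith
  have hcons : F w - ah u w ≤ S * ‖w‖ := by
    have := consistencyError.abs_sub_le (F := F) (u := u) hbdd hw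
    rw [abs_sub_comm] at this
    exact (le_abs_self _).trans this
  have happrox : ah (u - vh) w ≤ M * ‖u - vh‖ * ‖w‖ := (le_abs_self _).trans (hbdd _ _)
  have hsq : α * ‖w‖ * ‖w‖ ≤ (S + M * ‖u - vh‖) * ‖w‖ := by
    nlinarith [hcoer w hw]
  exact le_of_mul_le_mul_right hsq (norm_pos_iff.mpr hw0)

theorem norm_sub_le_approx_add_consistency (hα : 0 < α)
    (hcoer : ∀ v ∈ Vh, ah v v ≥ α * ‖v‖ ^ 2) (hM : 0 ≤ M)
    (hbdd : ∀ u v : V, |ah u v| ≤ M * ‖u‖ * ‖v‖) (huh : uh ∈ Vh)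
    (hdisc : ∀ vh ∈ Vh, ah uh vh = F vh) {vh : V} (hvh : vh ∈ Vh) :
    ‖u - uh‖ ≤ (1 + M / α) * ‖u - vh‖ + (1 / α) * consistencyError Vh ah F u := by
  have hdiscrete : ‖uh - vh‖ ≤ (consistencyError Vh ah F u + M * ‖u - vh‖) / α :=
    (le_div_iff₀' hα).mpr (mul_norm_discrete_error_le hcoer hM hbdd huh hdisc hvh)
  calc ‖u - uh‖ = ‖(u - vh) - (uh - vh)‖ := by rw [sub_sub_sub_cancel_right]
    _ ≤ ‖u - vh‖ + ‖uh - vh‖ := norm_sub_le _ _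
    _ ≤ ‖u - vh‖ + (consistencyError Vh ah F u + M * ‖u - vh‖) / α := by gcongr
    _ = (1 + M / α) * ‖u - vh‖ + (1 / α) * consistencyError Vh ah F u := by ring

end Strang

theorem stmt_13_general {V : Type*} [NormedAddCommGroup V] [NormedSpace ℝ V]
    (Vh : Subspace ℝ V)
    (ah : V →ₗ[ℝ] V →ₗ[ℝ] ℝ)
    (α : ℝ) (hα : 0 < α) (hcoer : ∀ v ∈ Vh, ah v v ≥ α * ‖v‖ ^ 2)
    (M : ℝ) (hM : 0 ≤ M) (hbdd : ∀ u v : V, |ah u v| ≤ M * ‖u‖ * ‖v‖)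
    (F : V →L[ℝ] ℝ) (u : V) (uh : V) (huh : uh ∈ Vh)
    (hdisc : ∀ vh ∈ Vh, ah uh vh = F vh) :
    ‖u - uh‖ ≤ (1 + M / α) * sInf {r : ℝ | ∃ vh ∈ Vh, r = ‖u - vh‖}
      + (1 / α) * sSup {r : ℝ | ∃ vh ∈ Vh, vh ≠ 0 ∧ r = |ah u vh - F vh| / ‖vh‖} := by
  refine Real.le_mul_csInf_add ?_ (by positivity) ?_
  · exact ⟨_, 0, Vh.zero_mem, rfl⟩
  · rintro _ ⟨vh, hvh, rfl⟩
    exact norm_sub_le_approx_add_consistency hα hcoer hM hbdd huh hdisc hvh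

/-- Second Strang Lemma: for a bilinear form `a_h` coercive (constant `α`) on a
finite-dimensional subspace `V_h` and bounded (constant `M`) on `V`, and a
discrete solution `u_h ∈ V_h` of `a_h(u_h, v_h) = F(v_h)` for all `v_h ∈ V_h`,
the error is bounded by the approximation error plus the nonconformity error:
`‖u - u_h‖ ≤ (1 + M/α) inf_{v_h∈V_h} ‖u - v_h‖
  + (1/α) sup_{0≠v_h∈V_h} |a_h(u,v_h) - F(v_h)|/‖v_h‖`. -/
theorem stmt_13 {V : Type*} [NormedAddCommGroup V] [NormedSpace ℝ V]
    (Vh : Subspace ℝ V) [FiniteDimensional ℝ Vh]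
    (ah : V →ₗ[ℝ] V →ₗ[ℝ] ℝ)
    (α : ℝ) (hα : 0 < α) (hcoer : ∀ v ∈ Vh, ah v v ≥ α * ‖v‖ ^ 2)
    (M : ℝ) (hM : 0 ≤ M) (hbdd : ∀ u v : V, |ah u v| ≤ M * ‖u‖ * ‖v‖)
    (F : V →L[ℝ] ℝ) (u : V) (uh : V) (huh : uh ∈ Vh)
    (hdisc : ∀ vh ∈ Vh, ah uh vh = F vh) :
    ‖u - uh‖ ≤ (1 + M / α) * sInf {r : ℝ | ∃ vh ∈ Vh, r = ‖u - vh‖}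
      + (1 / α) * sSup {r : ℝ | ∃ vh ∈ Vh, vh ≠ 0 ∧ r = |ah u vh - F vh| / ‖vh‖} :=
  stmt_13_general Vh ah α hα hcoer M hM hbdd F u uh huh hdisc
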